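/- arXiv:2001.00072 — 3 statements merged into one kernel-verified Lean document; each statement's English description precedes it below -/
import Mathlib

section
/- For the recursively constructed multicast lower-bound instance M_𝒮 with congestion parameter C (even) and depth parameter D, every label induces a rooted tree in the graph G_𝒮, so M_𝒮 is a valid simultaneous multicast instance. -/
/-- The graph induced by a label `χ`: edges carrying `χ` in their label set. -/
def labelGraph {V L : Type*} (lab : V → V → Finset L) (χ : L) : SimpleGraph V where
  Adj u v := u ≠ v ∧ (χ ∈ lab u v ∨ χ ∈ lab v u)
  symm := ⟨fun u v h => ⟨h.1.symm, h.2.symm⟩⟩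
  loopless := ⟨fun v h => h.1 rfl⟩

/-- The vertices of the multicast tree of label `χ`: its root together with all
vertices incident to an edge carrying `χ`. -/
def labelSupp {V L : Type*} (lab : V → V → Finset L) (root : L → V) (χ : L) : Set V :=
  {v | v = root χ ∨ ∃ u, (labelGraph lab χ).Adj v u}

/-- A store-and-forward schedule for a simultaneous multicast instance: in each
synchronous round at most one packet crosses each edge, packet `m_χ` (initially known
only to `root χ`) may only traverse edges of its tree (edges whose label set contains
`χ`), and nodes may copy packets. `knows t χ` is the set of vertices knowing `m_χ`
after `t` rounds, and `send t u v` is the packet sent from `u` to `v` in round `t+1`. -/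
structure Schedule (V L : Type*) (lab : V → V → Finset L) (root : L → V) where
  knows : ℕ → L → Set V
  send : ℕ → V → V → Option L
  init : ∀ χ, knows 0 χ = {root χ}
  send_mem : ∀ t u v χ, send t u v = some χ → χ ∈ lab u v ∧ u ∈ knows t χ
  one_per_edge : ∀ t u v, (send t u v).isSome → send t v u = none
  step : ∀ t χ, knows (t+1) χ = knows t χ ∪ {v | ∃ u, send t u v = some χ}

/-- A schedule has length at most `T` (solves the instance within `T` rounds) if
after `T` rounds every vertex of every multicast tree — in particular every leaf —
knows the corresponding packet. -/
def Schedule.Solves {V L : Type*} {lab : V → V → Finset L} {root : L → V}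
    (S : Schedule V L lab root) (T : ℕ) : Prop :=
  ∀ χ v, v ∈ labelSupp lab root χ → v ∈ S.knows T χ
section LowerBoundConstruction

variable {L : Type} [DecidableEq L]

open scoped Classical

/-- The ways of "guessing" delayed trees: for each adjacent pair
`(S (2i), S (2i+1))` of label sets, a choice of `C/2` labels from each. -/
def Choices (C m : ℕ) (S : Fin (2 * m) → Finset L) : Type :=
  { f : Fin m → Finset L × Finset L //
    ∀ i : Fin m,
      (f i).1 ⊆ S ⟨2 * i.1, by have := i.isLt; omega⟩ ∧ (f i).1.card = C / 2 ∧
      (f i).2 ⊆ S ⟨2 * i.1 + 1, by have := i.isLt; omega⟩ ∧ (f i).2.card = C / 2 }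

/-- The interleaved tuple `𝒮' ∈ I(𝒮)` corresponding to a choice. -/
def mergeS {C m : ℕ} {S : Fin (2 * m) → Finset L} (f : Choices C m S) :
    Fin m → Finset L := fun i => (f.1 i).1 ∪ (f.1 i).2

def reidx {d : ℕ} (S : Fin (2 ^ (d + 1)) → Finset L) : Fin (2 * 2 ^ d) → Finset L :=
  fun j => S ⟨j.1, by
    have h1 := j.isLt
    have h2 : 2 * 2 ^ d = 2 ^ (d + 1) := by rw [pow_succ, Nat.mul_comm]
    omega⟩

/-- Non-root vertices of the lower-bound instance `M_𝒮` (recursion level `d`,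
dilation `d+1`): for `d = 0` the single vertex `v`; for `d+1` the vertices `v_i`
(the identified roots of the sub-instances) together with, for each guess
`𝒮' ∈ I(𝒮)`, the non-root vertices of `M_𝒮'`. -/
def NRv (C : ℕ) : (d : ℕ) → (Fin (2 ^ d) → Finset L) → Type :=
  Nat.rec (motive := fun d => (Fin (2 ^ d) → Finset L) → Type)
    (fun _ => PUnit)
    (fun d ih S => Fin (2 ^ d) ⊕ (Σ f : Choices C (2 ^ d) (reidx S), ih (mergeS f)))

/-- All vertices of `M_𝒮`: the roots `r_j` together with the non-root vertices. -/
def Vx (C d : ℕ) (S : Fin (2 ^ d) → Finset L) : Type := Fin (2 ^ d) ⊕ NRv C d S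

/-- The labels carried by each edge of `G_𝒮` (`∅` meaning "no edge"): for `d = 0` a
single edge `(r, v)` carrying all labels of `S 0`; for `d + 1`, root edges
`(r_j, v_{⌊j/2⌋})` carrying `S j`, together with the edges of all sub-instances
`M_𝒮'`, `𝒮' ∈ I(𝒮)`, whose roots are identified with the vertices `v_i`. -/
noncomputable def labv (C : ℕ) : (d : ℕ) → (S : Fin (2 ^ d) → Finset L) →
    Vx C d S → Vx C d S → Finset L
  | 0, S, Sum.inl _, Sum.inr _ => S ⟨0, Nat.one_pos⟩
  | 0, S, Sum.inr _, Sum.inl _ => S ⟨0, Nat.one_pos⟩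
  | 0, _, _, _ => ∅
  | d + 1, S, u, v =>
    match u, v with
    | Sum.inl j, Sum.inr (Sum.inl i) => if j.1 / 2 = i.1 then S j else ∅
    | Sum.inr (Sum.inl i), Sum.inl j => if j.1 / 2 = i.1 then S j else ∅
    | Sum.inr (Sum.inl i), Sum.inr (Sum.inr ⟨f, y⟩) =>
        labv C d (mergeS f) (Sum.inl i) (Sum.inr y)
    | Sum.inr (Sum.inr ⟨f, y⟩), Sum.inr (Sum.inl i) =>
        labv C d (mergeS f) (Sum.inr y) (Sum.inl i)
    | Sum.inr (Sum.inr ⟨f, y⟩), Sum.inr (Sum.inr ⟨f', y'⟩) =>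
        if h : f = f' then labv C d (mergeS f') (Sum.inr (h ▸ y)) (Sum.inr y') else ∅
    | _, _ => ∅

/-- The root of the multicast tree of label `χ`: the root vertex `r_j` for the
(unique) `j` with `χ ∈ S j`. -/
noncomputable def rootV (C d : ℕ) (S : Fin (2 ^ d) → Finset L) (χ : L) : Vx C d S :=
  Sum.inl (if h : ∃ j, χ ∈ S j then h.choose else ⟨0, Nat.two_pow_pos d⟩)

end LowerBoundConstruction

/-!
The tree of a label `χ ∈ S_j` is described by a parent map: the vertex `v_i`, `i = ⌊j/2⌋`,
hangs from the root `r_j`, and a vertex of a copy of a sub-instance `M_𝒮'` hangs from its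
parent in `M_𝒮'`, the roots of `M_𝒮'` being the vertices `v_i`. As the sets of `𝒮` are disjoint,
`χ` lies in at most one set of each `𝒮'`, so by induction on the depth every `χ`-edge joins a
vertex to its parent, and every non-root vertex on a `χ`-edge is joined to its parent, which is
closer to the root. A graph with such a parent map is a tree.
-/

namespace SimpleGraph

variable {W : Type*} {G : SimpleGraph W}

theorem isTree_of_parent (r : W) (p : W → W) (rank : W → ℕ) (hr : p r = r)
    (hedge : ∀ u v, G.Adj u v → u = p v ∨ v = p u)
    (hparent : ∀ v, v ≠ r → G.Adj v (p v) ∧ rank (p v) < rank v) : G.IsTree := by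
  have eq_parent_of_rank_le : ∀ u v, G.Adj u v → rank v ≤ rank u → v = p u := by
    intro u v huv hle
    refine (hedge u v huv).resolve_left fun hu => ?_
    obtain rfl | hv := eq_or_ne v r
    · exact huv.ne (hu.trans hr)
    · exact (hu ▸ (hparent v hv).2).not_ge hle
  have reach_root : ∀ v, G.Reachable v r := fun v => by
    induction v using (measure rank).wf.induction with
    | _ v ih =>
      obtain rfl | hv := eq_or_ne v r
      · rfl
      · exact (hparent v hv).1.reachable.trans (ih _ (hparent v hv).2)
  refine ⟨(connected_iff G).2 ⟨fun u v => (reach_root u).trans (reach_root v).symm, ⟨r⟩⟩,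
    fun v c hc => ?_⟩
  classical
  -- At a vertex of maximal rank on the cycle, both cycle neighbours would be its parent.
  obtain ⟨m, hm, hmax⟩ := c.support.toFinset.exists_max_image rank ⟨v, by simp⟩
  rw [List.mem_toFinset] at hm
  set c' := c.rotate m hm
  have hc' : c'.IsCycle := hc.rotate hm
  have rank_le : ∀ w ∈ c'.support, rank w ≤ rank m := fun w hw =>
    hmax w (by simpa [c'] using hw)
  apply hc'.snd_ne_penultimate
  rw [eq_parent_of_rank_le _ _ (c'.adj_snd hc'.not_nil) (rank_le _ (c'.getVert_mem_support 1)),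
    eq_parent_of_rank_le _ _ (c'.adj_penultimate hc'.not_nil).symm
      (rank_le _ (c'.getVert_mem_support _))]

theorem isTree_induce_of_parent (r : W) (p : W → W) (rank : W → ℕ) (hr : p r = r)
    (hedge : ∀ u v, G.Adj u v → u = p v ∨ v = p u)
    (hparent : ∀ v, v ≠ r → (∃ u, G.Adj v u) → G.Adj v (p v) ∧ rank (p v) < rank v) :
    (G.induce {v | v = r ∨ ∃ u, G.Adj v u}).IsTree := by
  have maps_to : ∀ v ∈ {v | v = r ∨ ∃ u, G.Adj v u}, p v ∈ {v | v = r ∨ ∃ u, G.Adj v u} := by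
    rintro v (rfl | hv)
    · exact Or.inl hr
    · obtain rfl | hne := eq_or_ne v r
      · exact Or.inl hr
      · exact Or.inr ⟨v, ((hparent v hne hv).1).symm⟩
  refine isTree_of_parent ⟨r, Or.inl rfl⟩ (fun v => ⟨p v, maps_to v v.2⟩) (rank ·.1)
    (Subtype.ext hr) (fun u v huv => ?_) fun v hv => ?_
  · exact (hedge u v huv).imp Subtype.ext Subtype.ext
  · have hne : v.1 ≠ r := fun h => hv (Subtype.ext h)
    exact hparent v hne (v.2.resolve_left hne)

end SimpleGraph

section LowerBoundTrees

variable {L : Type} [DecidableEq L] {C : ℕ}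

theorem exists_mem_of_mem_mergeS {d : ℕ} {S : Fin (2 ^ (d + 1)) → Finset L}
    (f : Choices C (2 ^ d) (reidx S)) {i : Fin (2 ^ d)} {l : L} (h : l ∈ mergeS f i) :
    ∃ j : Fin (2 ^ (d + 1)), l ∈ S j ∧ j.1 / 2 = i.1 := by
  have hi := i.isLt
  rcases Finset.mem_union.mp h with h | h
  · exact ⟨⟨2 * i.1, by rw [pow_succ]; omega⟩, (f.2 i).1 h, by simp⟩
  · exact ⟨⟨2 * i.1 + 1, by rw [pow_succ]; omega⟩, (f.2 i).2.2.1 h, by simp; omega⟩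

/-- The copy of `M_𝒮'` inside `M_𝒮`, with its roots identified with the vertices `v_i`. -/
def embedVx {d : ℕ} {S : Fin (2 ^ (d + 1)) → Finset L} (f : Choices C (2 ^ d) (reidx S)) :
    Vx C d (mergeS f) → Vx C (d + 1) S
  | Sum.inl i => Sum.inr (Sum.inl i)
  | Sum.inr y => Sum.inr (Sum.inr ⟨f, y⟩)

theorem embedVx_injective {d : ℕ} {S : Fin (2 ^ (d + 1)) → Finset L}
    (f : Choices C (2 ^ d) (reidx S)) : Function.Injective (embedVx f) := by
  rintro (i | y) (i' | y') ⟨⟩ <;> rfl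

theorem labv_inl_inl {d : ℕ} {S : Fin (2 ^ d) → Finset L} (j j' : Fin (2 ^ d)) :
    labv C d S (Sum.inl j) (Sum.inl j') = ∅ := by
  cases d <;> rfl

theorem labv_embedVx {d : ℕ} {S : Fin (2 ^ (d + 1)) → Finset L}
    (f : Choices C (2 ^ d) (reidx S)) (u v : Vx C d (mergeS f)) :
    labv C (d + 1) S (embedVx f u) (embedVx f v) = labv C d (mergeS f) u v := by
  rcases u with i | y <;> rcases v with i' | y'
  · exact (labv_inl_inl i i').symm
  all_goals simp [embedVx, labv]

theorem adj_embedVx_iff {d : ℕ} {S : Fin (2 ^ (d + 1)) → Finset L}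
    (f : Choices C (2 ^ d) (reidx S)) (χ : L) {u v : Vx C d (mergeS f)} :
    (labelGraph (labv C (d + 1) S) χ).Adj (embedVx f u) (embedVx f v) ↔
      (labelGraph (labv C d (mergeS f)) χ).Adj u v := by
  simp only [labelGraph, labv_embedVx, (embedVx_injective f).ne_iff]

theorem rootV_eq_of_mem {d : ℕ} {S : Fin (2 ^ d) → Finset L} {χ : L}
    (hχ : {j | χ ∈ S j}.Subsingleton) {j : Fin (2 ^ d)} (hj : χ ∈ S j) :
    rootV C d S χ = Sum.inl j := by
  have hex : ∃ j, χ ∈ S j := ⟨j, hj⟩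
  rw [rootV, dif_pos hex, hχ hex.choose_spec hj]

theorem subsingleton_mem_mergeS {d : ℕ} {S : Fin (2 ^ (d + 1)) → Finset L} {χ : L}
    (hχ : {j | χ ∈ S j}.Subsingleton) (f : Choices C (2 ^ d) (reidx S)) :
    {i | χ ∈ mergeS f i}.Subsingleton := by
  intro i hi i' hi'
  obtain ⟨j, hj, hji⟩ := exists_mem_of_mem_mergeS f hi
  obtain ⟨j', hj', hj'i'⟩ := exists_mem_of_mem_mergeS f hi'
  obtain rfl := hχ hj hj'
  exact Fin.ext (hji.symm.trans hj'i')

theorem mem_of_adj_inl {d : ℕ} {S : Fin (2 ^ d) → Finset L} {χ : L} {j : Fin (2 ^ d)}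
    {u : Vx C d S} (h : (labelGraph (labv C d S) χ).Adj (Sum.inl j) u) : χ ∈ S j := by
  obtain ⟨-, h⟩ := h
  cases d with
  | zero =>
    rcases u with j' | y
    · simp [labv] at h
    · rw [Subsingleton.elim (α := Fin 1) j ⟨0, Nat.one_pos⟩]
      simpa [labv] using h
  | succ d =>
    rcases u with j' | (i | ⟨f, y⟩) <;> simp [labv, apply_ite (χ ∈ ·)] at h
    exact h.2

noncomputable def parent (C : ℕ) (χ : L) :
    (d : ℕ) → (S : Fin (2 ^ d) → Finset L) → Vx C d S → Vx C d S
  | _, _, Sum.inl j => Sum.inl j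
  | 0, _, Sum.inr _ => Sum.inl ⟨0, Nat.one_pos⟩
  | d + 1, S, Sum.inr (Sum.inl _) => rootV C (d + 1) S χ
  | d + 1, _, Sum.inr (Sum.inr ⟨f, y⟩) => embedVx f (parent C χ d (mergeS f) (Sum.inr y))

def depth (C : ℕ) : (d : ℕ) → (S : Fin (2 ^ d) → Finset L) → Vx C d S → ℕ
  | _, _, Sum.inl _ => 0
  | 0, _, Sum.inr _ => 1
  | _ + 1, _, Sum.inr (Sum.inl _) => 1
  | d + 1, _, Sum.inr (Sum.inr ⟨f, y⟩) => depth C d (mergeS f) (Sum.inr y) + 1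

theorem parent_inl (χ : L) {d : ℕ} {S : Fin (2 ^ d) → Finset L} (j : Fin (2 ^ d)) :
    parent C χ d S (Sum.inl j) = Sum.inl j := by
  cases d <;> rfl

theorem depth_embedVx {d : ℕ} {S : Fin (2 ^ (d + 1)) → Finset L}
    (f : Choices C (2 ^ d) (reidx S)) (u : Vx C d (mergeS f)) :
    depth C (d + 1) S (embedVx f u) = depth C d (mergeS f) u + 1 := by
  rcases u with i | y
  · cases d <;> rfl
  · rfl

theorem depth_parent_lt (χ : L) :
    ∀ {d : ℕ} {S : Fin (2 ^ d) → Finset L} (y : NRv C d S),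
      depth C d S (parent C χ d S (Sum.inr y)) < depth C d S (Sum.inr y)
  | 0, _, _ => by simp [parent, depth]
  | d + 1, S, Sum.inl _ => by simp [parent, depth, rootV]
  | d + 1, S, Sum.inr ⟨f, y⟩ => by
    rw [parent, depth_embedVx]
    exact Nat.succ_lt_succ (depth_parent_lt χ y)

theorem adj_inl_inr_inl {d : ℕ} {S : Fin (2 ^ (d + 1)) → Finset L} {χ : L}
    {j : Fin (2 ^ (d + 1))} {i : Fin (2 ^ d)} (hj : χ ∈ S j) (hji : j.1 / 2 = i.1) :
    (labelGraph (labv C (d + 1) S) χ).Adj (Sum.inl j) (Sum.inr (Sum.inl i)) :=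
  ⟨Sum.inl_ne_inr, Or.inl (by simpa [labv, hji] using hj)⟩

theorem adj_succ_cases {d : ℕ} {S : Fin (2 ^ (d + 1)) → Finset L} {χ : L}
    {u v : Vx C (d + 1) S} (h : (labelGraph (labv C (d + 1) S) χ).Adj u v) :
    (∃ j i, χ ∈ S j ∧ j.1 / 2 = i.1 ∧
      (u = Sum.inl j ∧ v = Sum.inr (Sum.inl i) ∨ u = Sum.inr (Sum.inl i) ∧ v = Sum.inl j)) ∨
    ∃ f u' v', u = embedVx f u' ∧ v = embedVx f v' ∧
      (labelGraph (labv C d (mergeS f)) χ).Adj u' v' := by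
  rcases u with j | i | ⟨f, y⟩ <;> rcases v with j' | i' | ⟨f', y'⟩
  case inr.inl.inr.inr => exact Or.inr ⟨f', .inl i, .inr y', rfl, rfl, (adj_embedVx_iff f' χ).1 h⟩
  case inr.inr.inr.inl => exact Or.inr ⟨f, .inr y, .inl i', rfl, rfl, (adj_embedVx_iff f χ).1 h⟩
  case inr.inr.inr.inr =>
    obtain rfl : f = f' := by
      by_contra hf
      simp [labelGraph, labv, hf, Ne.symm hf] at h
    exact Or.inr ⟨f, .inr y, .inr y', rfl, rfl, (adj_embedVx_iff f χ).1 h⟩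
  all_goals simp [labelGraph, labv, apply_ite (χ ∈ ·)] at h
  · exact Or.inl ⟨j, i', h.2, h.1, Or.inl ⟨rfl, rfl⟩⟩
  · exact Or.inl ⟨j', i, h.2, h.1, Or.inr ⟨rfl, rfl⟩⟩

theorem embedVx_eq_parent_embedVx {χ : L} {d : ℕ} {S : Fin (2 ^ (d + 1)) → Finset L}
    {f : Choices C (2 ^ d) (reidx S)} {u v : Vx C d (mergeS f)} (hne : u ≠ v)
    (h : u = parent C χ d (mergeS f) v) :
    embedVx f u = parent C χ (d + 1) S (embedVx f v) := by
  rcases v with i | y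
  · exact absurd (h.trans (parent_inl χ i)) hne
  · rw [h]
    rfl

theorem eq_parent_or_eq_parent_of_adj {χ : L} :
    ∀ {d : ℕ} {S : Fin (2 ^ d) → Finset L} {u v : Vx C d S}, {j | χ ∈ S j}.Subsingleton →
      (labelGraph (labv C d S) χ).Adj u v → u = parent C χ d S v ∨ v = parent C χ d S u
  | 0, S, u, v, _, h => by
    rcases u with j | y <;> rcases v with j' | y'
    · simp [labelGraph, labv] at h
    · exact Or.inl (congrArg Sum.inl (Subsingleton.elim (α := Fin 1) _ _))
    · exact Or.inr (congrArg Sum.inl (Subsingleton.elim (α := Fin 1) _ _))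
    · simp [labelGraph, labv] at h
  | d + 1, S, u, v, hχ, h => by
    rcases adj_succ_cases h with
      ⟨j, i, hj, -, ⟨rfl, rfl⟩ | ⟨rfl, rfl⟩⟩ | ⟨f, u', v', rfl, rfl, h'⟩
    · exact Or.inl (rootV_eq_of_mem hχ hj).symm
    · exact Or.inr (rootV_eq_of_mem hχ hj).symm
    · exact (eq_parent_or_eq_parent_of_adj (subsingleton_mem_mergeS hχ f) h').imp
        (embedVx_eq_parent_embedVx h'.ne) (embedVx_eq_parent_embedVx h'.ne.symm)

theorem adj_parent_of_adj {χ : L} :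
    ∀ {d : ℕ} {S : Fin (2 ^ d) → Finset L} {y : NRv C d S} {u : Vx C d S},
      {j | χ ∈ S j}.Subsingleton → (labelGraph (labv C d S) χ).Adj (Sum.inr y) u →
      (labelGraph (labv C d S) χ).Adj (Sum.inr y) (parent C χ d S (Sum.inr y))
  | 0, S, y, u, _, h => by
    rcases u with j | y'
    · rwa [Subsingleton.elim (α := Fin 1) j ⟨0, Nat.one_pos⟩] at h
    · simp [labelGraph, labv] at h
  | d + 1, S, Sum.inl i, u, hχ, h => by
    obtain ⟨j, hj, hji⟩ : ∃ j : Fin (2 ^ (d + 1)), χ ∈ S j ∧ j.1 / 2 = i.1 := by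
      rcases adj_succ_cases h with
        ⟨j, i', hj, hji', ⟨⟨⟩, -⟩ | ⟨⟨⟩, -⟩⟩ | ⟨f, u', v', hu', -, h'⟩
      · exact ⟨j, hj, hji'⟩
      · rcases u' with i' | y' <;> cases hu'
        exact exists_mem_of_mem_mergeS f (mem_of_adj_inl h')
    rw [parent, rootV_eq_of_mem hχ hj]
    exact (adj_inl_inr_inl hj hji).symm
  | d + 1, S, Sum.inr ⟨f, y⟩, u, hχ, h => by
    rcases adj_succ_cases h with
      ⟨j, i, -, -, ⟨⟨⟩, -⟩ | ⟨⟨⟩, -⟩⟩ | ⟨f', u', v', hu', -, h'⟩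
    rcases u' with i' | y' <;> cases hu'
    exact (adj_embedVx_iff f χ).2 (adj_parent_of_adj (subsingleton_mem_mergeS hχ f) h')

end LowerBoundTrees

theorem lower_bound_instance_labels_induce_trees_general
    {L : Type} [DecidableEq L] (C d : ℕ)
    (S : Fin (2 ^ d) → Finset L)
    (hdisj : ∀ j j', j ≠ j' → Disjoint (S j) (S j'))
    (χ : L) :
    rootV C d S χ ∈ labelSupp (labv C d S) (rootV C d S) χ ∧
    ((labelGraph (labv C d S) χ).induce
        (labelSupp (labv C d S) (rootV C d S) χ)).IsTree := by
  have hχ : {j | χ ∈ S j}.Subsingleton := fun j hj j' hj' => by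
    by_contra hne
    exact Finset.disjoint_left.mp (hdisj j j' hne) hj hj'
  refine ⟨Or.inl rfl, SimpleGraph.isTree_induce_of_parent _ (parent C χ d S) (depth C d S)
    (parent_inl χ _) (fun _ _ => eq_parent_or_eq_parent_of_adj hχ) ?_⟩
  rintro (j | y) hne ⟨u, hu⟩
  · exact absurd (rootV_eq_of_mem hχ (mem_of_adj_inl hu)).symm hne
  · exact ⟨adj_parent_of_adj hχ hu, depth_parent_lt χ y⟩

/-- For the recursively constructed multicast lower-bound instance
`M_𝒮` with congestion parameter `C` (even, positive) and recursion depth `d`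
(dilation `D = d + 1`), where `𝒮` partitions `C · 2^d` distinct labels into sets of
size `C`, every label `χ` induces a rooted tree in `G_𝒮`: the subgraph of edges
carrying `χ`, restricted to its vertices (which include `χ`'s root), is a tree.
Hence `M_𝒮` is a valid simultaneous multicast instance. -/
theorem lower_bound_instance_labels_induce_trees
    {L : Type} [DecidableEq L] (C d : ℕ) (hCeven : Even C) (hCpos : 0 < C)
    (S : Fin (2 ^ d) → Finset L)
    (hcard : ∀ j, (S j).card = C)
    (hdisj : ∀ j j', j ≠ j' → Disjoint (S j) (S j'))
    (χ : L) (hχ : ∃ j, χ ∈ S j) :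
    rootV C d S χ ∈ labelSupp (labv C d S) (rootV C d S) χ ∧
    ((labelGraph (labv C d S) χ).induce
        (labelSupp (labv C d S) (rootV C d S) χ)).IsTree :=
  lower_bound_instance_labels_induce_trees_general C d S hdisj χ
end

section
/- The number of edges m_D of the recursively constructed lower-bound graph G_𝒮 with parameters C (even, C ≥ 1) and D satisfies m_D ≤ 2^{C·2^D + D}, and hence the number of vertices is at most 2^{C·2^{D+1}}. -/
/-! Since `C choose C/2 ≤ 2^C`, each level of the recursion multiplies the edge count by at most
`2^(C·2^(D-1))` and adds `2^(D-1)`, which is absorbed by doubling; the exponents `C·2^(D-1)`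
telescope to `C·2^D`. For the vertices, the extra factor `2` and the summand `D` fit into
`C·2^(D+1) - C·2^D = C·2^D` because `D < 2^D ≤ C·2^D`. -/

theorem Nat.le_two_pow_of_le_two_pow_add_two_pow_mul {C : ℕ} {m : ℕ → ℕ} (h1 : m 1 ≤ 1)
    (hrec : ∀ D, 1 ≤ D → m (D + 1) ≤ 2 ^ D + 2 ^ (C * 2 ^ D) * m D) :
    ∀ D, 1 ≤ D → m D ≤ 2 ^ (C * 2 ^ D + D) := by
  intro D hD
  induction D, hD using Nat.le_induction with
  | base => exact h1.trans Nat.one_le_two_pow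
  | succ n hn ih =>
    have hsummand : 2 ^ n ≤ 2 ^ (C * 2 ^ n + (C * 2 ^ n + n)) :=
      Nat.pow_le_pow_right two_pos (by omega)
    calc m (n + 1) ≤ 2 ^ n + 2 ^ (C * 2 ^ n) * 2 ^ (C * 2 ^ n + n) :=
          (hrec n hn).trans (by gcongr)
      _ ≤ 2 * 2 ^ (C * 2 ^ n + (C * 2 ^ n + n)) := by rw [← pow_add]; omega
      _ = 2 ^ (C * 2 ^ (n + 1) + (n + 1)) := by ring

theorem Nat.two_mul_two_pow_le_two_pow {C : ℕ} (hC : 1 ≤ C) (D : ℕ) :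
    2 * 2 ^ (C * 2 ^ D + D) ≤ 2 ^ (C * 2 ^ (D + 1)) := by
  rw [← pow_succ']
  refine Nat.pow_le_pow_right two_pos ?_
  have hD : D + 1 ≤ C * 2 ^ D := (Nat.lt_two_pow_self).trans_le (Nat.le_mul_of_pos_left _ hC)
  rw [pow_succ]
  linarith

theorem lower_bound_graph_size_general (C : ℕ) (hC : 1 ≤ C)
    (m v : ℕ → ℕ) (hm1 : m 1 = 1)
    (hmrec : ∀ D, 2 ≤ D → m D = 2 ^ (D - 1) + (C.choose (C / 2)) ^ (2 ^ (D - 1)) * m (D - 1))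
    (hv : ∀ D, 1 ≤ D → v D ≤ 2 * m D) :
    ∀ D, 1 ≤ D → m D ≤ 2 ^ (C * 2 ^ D + D) ∧ v D ≤ 2 ^ (C * 2 ^ (D + 1)) := by
  have hm : ∀ D, 1 ≤ D → m D ≤ 2 ^ (C * 2 ^ D + D) := by
    refine Nat.le_two_pow_of_le_two_pow_add_two_pow_mul hm1.le fun D hD => ?_
    rw [hmrec (D + 1) (by omega), Nat.add_sub_cancel, pow_mul]
    gcongr
    exact Nat.choose_le_two_pow C (C / 2)
  intro D hD
  exact ⟨hm D hD, (hv D hD).trans <|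
    (Nat.mul_le_mul_left 2 (hm D hD)).trans (Nat.two_mul_two_pow_le_two_pow hC D)⟩

/-- The number of edges `m D` of the recursively constructed
lower-bound graph `G_𝒮` with parameters `C` (even, `C ≥ 1`) and `D` satisfies the
recurrence `m 1 = 1`, `m D = 2^(D-1) + (C choose C/2)^(2^(D-1)) * m (D-1)` for
`D ≥ 2`, and its number of vertices `v D` is at most `2 * m D`. Then
`m D ≤ 2^(C·2^D + D)`, and hence `v D ≤ 2^(C·2^(D+1))`, for all `D ≥ 1`. -/
theorem lower_bound_graph_size (C : ℕ) (hC : 1 ≤ C) (hCeven : Even C)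
    (m v : ℕ → ℕ) (hm1 : m 1 = 1)
    (hmrec : ∀ D, 2 ≤ D → m D = 2 ^ (D - 1) + (C.choose (C / 2)) ^ (2 ^ (D - 1)) * m (D - 1))
    (hv : ∀ D, 1 ≤ D → v D ≤ 2 * m D) :
    ∀ D, 1 ≤ D → m D ≤ 2 ^ (C * 2 ^ D + D) ∧ v D ≤ 2 ^ (C * 2 ^ (D + 1)) :=
  lower_bound_graph_size_general C hC m v hm1 hmrec hv
end

section
/- For any positive integers C, D, n with C·2^{D+1} ≤ log₂ n, there exists a simultaneous multicast instance on an n-node graph with congestion C and dilation D whose every schedule has length at least C·D/2. -/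
/-!
Base bundles of `C` packets sharing a root are merged pairwise along a complete binary tree of
depth `D`: at a merge vertex the `2 C` packets of two sub-bundles meet and only `C` of them
continue together. The merge vertices are created for every possible history of the two
sub-bundles, so that the packets continuing can be chosen after the schedule is known. Each of
the two edges into a merge vertex carries one packet per round, so during the `C / 2` rounds
after the sub-bundles reach their ports at most `C` of the `2 C` packets get through; the `C`
latest ones continue, and every level costs the schedule `C / 2 + 1` rounds. Counting the
histories gives at most `2 ^ (C * 2 ^ (D + 1))` vertices; dummy vertices make up the rest.
-/

open SimpleGraph Finset

namespace Schedule

variable {V L : Type*} {lab : V → V → Finset L} {root : L → V} (S : Schedule V L lab root)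

theorem knows_mono (χ : L) : Monotone (S.knows · χ) :=
  monotone_nat_of_le_succ fun t => by rw [S.step]; exact Set.subset_union_left

theorem exists_send_of_mem_knows {χ : L} {W : Set V} {u z : V} (hroot : root χ ∉ W)
    (hentry : ∀ t x y, S.send t x y = some χ → x ∉ W → y ∈ W → x = u ∧ y = z) :
    ∀ {t v}, v ∈ W → v ∈ S.knows t χ → ∃ t' < t, S.send t' u z = some χ := by
  intro t
  induction t with
  | zero =>
    intro v hv hk
    rw [S.init, Set.mem_singleton_iff] at hk
    exact absurd (hk ▸ hv) hroot
  | succ t ih =>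
    intro v hv hk
    rw [S.step, Set.mem_union] at hk
    rcases hk with hk | ⟨x, hx⟩
    · obtain ⟨t', ht', hs⟩ := ih hv hk
      exact ⟨t', by omega, hs⟩
    · by_cases hxW : x ∈ W
      · obtain ⟨t', ht', hs⟩ := ih hxW (S.send_mem t x v χ hx).2
        exact ⟨t', by omega, hs⟩
      · obtain ⟨rfl, rfl⟩ := hentry t x v hx hxW hv
        exact ⟨t, by omega, hx⟩

open Classical in
theorem card_filter_sent_le (A : Finset L) (u v : V) (τ k : ℕ) :
    #(A.filter fun χ => ∃ t, τ ≤ t ∧ t < τ + k ∧ S.send t u v = some χ) ≤ k := by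
  calc _ ≤ #((Ico τ (τ + k)).image (S.send · u v)) := by
        refine card_le_card_of_injOn some (fun χ hχ => ?_) (Option.some_injective L).injOn
        obtain ⟨t, ht₁, ht₂, hs⟩ := (mem_filter.mp hχ).2
        exact mem_image.mpr ⟨t, mem_Ico.mpr ⟨ht₁, ht₂⟩, hs⟩
    _ ≤ #(Ico τ (τ + k)) := card_image_le
    _ = k := by simp

end Schedule

/-- Rooted trees given by parent pointers, one per label; the depth is shared by all trees, so
every edge joins two consecutive layers. -/
structure TreeFamily (V L : Type*) where
  root : L → V
  mem : L → Set V
  parent : L → V → V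
  depth : V → ℕ
  root_mem (χ : L) : root χ ∈ mem χ
  depth_root (χ : L) : depth (root χ) = 0
  parent_mem {χ : L} {v : V} : v ∈ mem χ → v ≠ root χ → parent χ v ∈ mem χ
  depth_parent {χ : L} {v : V} : v ∈ mem χ → v ≠ root χ → depth v = depth (parent χ v) + 1

namespace TreeFamily

variable {V L : Type*} (F : TreeFamily V L) {χ : L} {u v : V}

def IsParent (χ : L) (u v : V) : Prop := v ∈ F.mem χ ∧ v ≠ F.root χ ∧ F.parent χ v = u

variable {F}

theorem IsParent.depth_eq (h : F.IsParent χ u v) : F.depth v = F.depth u + 1 :=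
  h.2.2 ▸ F.depth_parent h.1 h.2.1

theorem IsParent.ne (h : F.IsParent χ u v) : u ≠ v := by
  rintro rfl; have := h.depth_eq; omega

theorem IsParent.mem_left (h : F.IsParent χ u v) : u ∈ F.mem χ :=
  h.2.2 ▸ F.parent_mem h.1 h.2.1

theorem isParent_parent (hv : v ∈ F.mem χ) (hvr : v ≠ F.root χ) :
    F.IsParent χ (F.parent χ v) v :=
  ⟨hv, hvr, rfl⟩

variable (F)

open Classical in
noncomputable def lab [Fintype L] (u v : V) : Finset L :=
  univ.filter fun χ => F.IsParent χ u v ∨ F.IsParent χ v u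

variable [Fintype L]

theorem mem_lab : χ ∈ F.lab u v ↔ F.IsParent χ u v ∨ F.IsParent χ v u := by
  classical
  simp [lab]

theorem lab_comm (u v : V) : F.lab u v = F.lab v u := by
  ext χ; simp only [mem_lab, or_comm]

theorem adj_iff : (labelGraph F.lab χ).Adj u v ↔ F.IsParent χ u v ∨ F.IsParent χ v u := by
  refine ⟨fun h => ?_, fun h => ⟨?_, Or.inl (F.mem_lab.mpr h)⟩⟩
  · rcases h.2 with h | h
    · exact F.mem_lab.mp h
    · exact (F.mem_lab.mp h).symm
  · rcases h with h | h
    exacts [h.ne, h.ne.symm]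

theorem labelSupp_lab : labelSupp F.lab F.root χ = F.mem χ := by
  ext v
  constructor
  · rintro (rfl | ⟨u, huv⟩)
    · exact F.root_mem χ
    · rcases F.adj_iff.mp huv with h | h
      exacts [h.mem_left, h.1]
  · intro hv
    by_cases hvr : v = F.root χ
    · exact Or.inl hvr
    · exact Or.inr ⟨_, F.adj_iff.mpr (Or.inr (isParent_parent hv hvr))⟩

/-- A first step down to a child `x` could never return: the rest of the path would have to
pass through the parent of `x` again. -/
theorem length_eq_depth_and_isParent_getVert_one :
    ∀ {u w : V} (p : (labelGraph F.lab χ).Walk u w), w = F.root χ → p.IsPath →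
      p.length = F.depth u ∧ (u ≠ w → F.IsParent χ (p.getVert 1) u)
  | _, _, .nil, rfl, _ => ⟨(F.depth_root χ).symm, fun h => absurd rfl h⟩
  | u, _, .cons (v := x) h q, hw, hp => by
    obtain ⟨hq, hu⟩ := (Walk.cons_isPath_iff h q).mp hp
    have hq := length_eq_depth_and_isParent_getVert_one q hw hq
    rcases F.adj_iff.mp h with hux | hxu
    · have hxw : x ≠ _ := hw ▸ hux.2.1
      have hpar : q.getVert 1 = u := (hq.2 hxw).2.2.symm.trans hux.2.2
      exact absurd (hpar ▸ q.getVert_mem_support 1) hu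
    · simp only [Walk.length_cons, Walk.getVert_cons_succ, Walk.getVert_zero]
      exact ⟨by rw [hq.1, hxu.depth_eq], fun _ => hxu⟩

open Classical in
/-- Edges join consecutive layers, so no edge is oriented downwards by one label and upwards
by another. -/
theorem card_lab_le {C : ℕ} (h : ∀ u v, #(univ.filter (F.IsParent · u v)) ≤ C) (u v : V) :
    #(F.lab u v) ≤ C := by
  by_cases huv : ∃ χ, F.IsParent χ u v
  · obtain ⟨χ₀, h₀⟩ := huv
    refine (card_le_card fun χ hχ => ?_).trans (h u v)
    rcases F.mem_lab.mp hχ with hχ | hχ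
    · exact mem_filter.mpr ⟨mem_univ _, hχ⟩
    · have := h₀.depth_eq; have := hχ.depth_eq; omega
  · refine (card_le_card fun χ hχ => ?_).trans (h v u)
    rcases F.mem_lab.mp hχ with hχ | hχ
    · exact absurd ⟨χ, hχ⟩ huv
    · exact mem_filter.mpr ⟨mem_univ _, hχ⟩

theorem length_eq_depth {p : (labelGraph F.lab χ).Walk u (F.root χ)} (hp : p.IsPath) :
    p.length = F.depth u :=
  (F.length_eq_depth_and_isParent_getVert_one p rfl hp).1

theorem induce_reachable_root (hv : v ∈ F.mem χ) :
    ((labelGraph F.lab χ).induce (F.mem χ)).Reachable ⟨v, hv⟩ ⟨F.root χ, F.root_mem χ⟩ := by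
  induction hd : F.depth v generalizing v with
  | zero =>
    obtain rfl : v = F.root χ := by
      by_contra hvr; have := F.depth_parent hv hvr; omega
    rfl
  | succ d ih =>
    have hvr : v ≠ F.root χ := by rintro rfl; rw [F.depth_root] at hd; omega
    have hpv := isParent_parent hv hvr
    exact (induce_adj.mpr (F.adj_iff.mpr (Or.inr hpv))).reachable.trans
      (ih hpv.mem_left (by have := hpv.depth_eq; omega))

theorem exists_isPath_to_root (hv : v ∈ F.mem χ) :
    ∃ p : (labelGraph F.lab χ).Walk v (F.root χ), p.IsPath ∧ p.length = F.depth v := by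
  classical
  obtain ⟨p⟩ := F.induce_reachable_root hv
  have hp := (p.map (Embedding.induce (F.mem χ)).toHom).bypass_isPath
  exact ⟨_, hp, F.length_eq_depth hp⟩

/-- On a cycle, a vertex of maximal depth would have two distinct neighbours of smaller depth,
but the only such neighbour is its parent. -/
theorem isAcyclic : (labelGraph F.lab χ).IsAcyclic := by
  classical
  intro v c hc
  obtain ⟨m, hm, hmax⟩ := c.support.toFinset.exists_max_image F.depth ⟨v, by simp⟩
  rw [List.mem_toFinset] at hm
  have hc' := hc.rotate hm
  have hnil : ¬ (c.rotate m hm).Nil := hc'.not_nil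
  have hparent : ∀ y, (labelGraph F.lab χ).Adj m y → y ∈ (c.rotate m hm).support →
      y = F.parent χ m := by
    intro y hy hys
    rcases F.adj_iff.mp hy with hmy | hym
    · have := hmax y (List.mem_toFinset.mpr ((Walk.mem_support_rotate_iff ..).mp hys))
      have := hmy.depth_eq; omega
    · exact hym.2.2.symm
  exact hc'.snd_ne_penultimate <|
    (hparent _ (Walk.adj_snd hnil) (Walk.getVert_mem_support _ _)).trans
      (hparent _ (Walk.adj_penultimate hnil).symm (Walk.getVert_mem_support _ _)).symm

theorem isTree_induce : ((labelGraph F.lab χ).induce (F.mem χ)).IsTree := by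
  refine ⟨?_, F.isAcyclic.induce _⟩
  have : Nonempty (F.mem χ) := ⟨⟨_, F.root_mem χ⟩⟩
  exact .mk fun u v => (F.induce_reachable_root u.2).trans (F.induce_reachable_root v.2).symm

/-- A packet can only enter the subtree below `z` across the edge from the parent of `z`. -/
theorem exists_send_parent (S : Schedule V L F.lab F.root) {z : V} {t : ℕ}
    (hz : z ∈ F.mem χ) (hzr : z ≠ F.root χ) (hk : z ∈ S.knows t χ) :
    ∃ t' < t, S.send t' (F.parent χ z) z = some χ := by
  let W := {v | Relation.ReflTransGen (fun a b => F.IsParent χ b a) v z}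
  refine S.exists_send_of_mem_knows (W := W) ?_ ?_ Relation.ReflTransGen.refl hk
  · intro h
    rcases h.cases_head with h | ⟨c, hc, -⟩
    exacts [hzr h.symm, hc.2.1 rfl]
  · intro t x y hs hx hy
    rcases F.mem_lab.mp (S.send_mem t x y χ hs).1 with hxy | hyx
    · rcases hy.cases_head with rfl | ⟨c, hc, hcz⟩
      · exact ⟨hxy.2.2.symm, rfl⟩
      · exact absurd (hc.2.2.symm.trans hxy.2.2 ▸ hcz) hx
    · exact absurd (Relation.ReflTransGen.head (r := fun a b => F.IsParent χ b a) hyx hy) hx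

open Classical in
/-- These packets cross the single edge `p → z` one per round, and not before round `τ`. -/
theorem card_filter_mem_knows_le (S : Schedule V L F.lab F.root) {p z : V} {A : Finset L}
    {τ : ℕ} (k : ℕ) (hA : ∀ χ ∈ A, F.IsParent χ p z)
    (hlate : ∀ χ ∈ A, ∀ t, p ∈ S.knows t χ → τ ≤ t) :
    #(A.filter fun χ => z ∈ S.knows (τ + k) χ) ≤ k := by
  refine le_trans (card_le_card fun χ hχ => ?_) (S.card_filter_sent_le A p z τ k)
  obtain ⟨hχA, hk⟩ := mem_filter.mp hχ
  obtain ⟨hz, hzr, hpar⟩ := hA χ hχA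
  obtain ⟨t, ht, hs⟩ := F.exists_send_parent S hz hzr hk
  rw [hpar] at hs
  exact mem_filter.mpr ⟨hχA, t, hlate χ hχA t (S.send_mem t p z χ hs).2, ht, hs⟩

end TreeFamily

section SelectByIndex

variable {α : Type*} [BEq α]

noncomputable def selectByIndex (M : Finset ℕ) (U : Finset α) : Finset α :=
  U.filter (U.toList.idxOf · ∈ M)

theorem selectByIndex_subset (M : Finset ℕ) (U : Finset α) : selectByIndex M U ⊆ U :=
  filter_subset _ _

variable [LawfulBEq α]

theorem idxOf_toList_injOn (U : Finset α) : Set.InjOn U.toList.idxOf U := fun _ hx _ _ h =>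
  (List.idxOf_inj (mem_toList.mpr hx)).mp h

theorem idxOf_toList_lt_card {U : Finset α} {x : α} (hx : x ∈ U) : U.toList.idxOf x < #U :=
  length_toList U ▸ List.idxOf_lt_length_iff.mpr (mem_toList.mpr hx)

theorem card_selectByIndex_le (M : Finset ℕ) (U : Finset α) : #(selectByIndex M U) ≤ #M :=
  card_le_card_of_injOn _ (fun _ hx => (mem_filter.mp hx).2)
    ((idxOf_toList_injOn U).mono (selectByIndex_subset M U))

theorem selectByIndex_image_idxOf {σ U : Finset α} (h : σ ⊆ U) :
    selectByIndex (σ.image U.toList.idxOf) U = σ := by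
  ext x
  simp only [selectByIndex, mem_filter, mem_image]
  constructor
  · rintro ⟨hx, y, hy, hyx⟩
    rwa [← idxOf_toList_injOn U (h hy) hx hyx]
  · exact fun hx => ⟨h hx, x, hx, rfl⟩

end SelectByIndex

namespace MergeInstance

variable (C D : ℕ)

def masks : Finset (Finset ℕ) := (range (2 * C)).powerset.filter (#· ≤ C)

/-- An outcome of a bundle of level `ℓ` records the outcomes of its two sub-bundles and a mask
choosing, by position, at most `C` of their packets to continue together. -/
def Outcome : ℕ → Type
  | 0 => Unit
  | ℓ + 1 => Outcome ℓ × Outcome ℓ × masks C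

instance instFintypeOutcome : ∀ ℓ, Fintype (Outcome C ℓ)
  | 0 => inferInstanceAs (Fintype Unit)
  | ℓ + 1 =>
    letI := instFintypeOutcome ℓ
    inferInstanceAs (Fintype (Outcome C ℓ × Outcome C ℓ × masks C))

/-- Packet `(β, i)` is the `i`-th packet of the base bundle `β`. -/
abbrev Packet := Fin (2 ^ D) × Fin C

/-- The packets of bundle `b` of level `ℓ` that continue together after outcome `ω`; bundle `b`
of level `ℓ + 1` merges bundles `2 b` and `2 b + 1` of level `ℓ`. -/
noncomputable def packets : (ℓ : ℕ) → ℕ → Outcome C ℓ → Finset (Packet C D)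
  | 0, b, _ => univ.filter fun χ => (χ.1 : ℕ) = b
  | ℓ + 1, b, (ωA, ωB, M) => selectByIndex M.1 (packets ℓ (2 * b) ωA ∪ packets ℓ (2 * b + 1) ωB)

/-- `root β` is the common root of the packets of base bundle `β`; `merge ℓ b ωA ωB` is where
bundle `b` of level `ℓ + 1` meets once its two sub-bundles have outcomes `ωA` and `ωB`; the
`dummy` vertices are isolated. -/
inductive Vert (P : Type)
  | root : Fin (2 ^ D) → Vert P
  | merge (ℓ : Fin D) : Fin (2 ^ (D - 1 - ℓ)) → Outcome C ℓ → Outcome C ℓ → Vert P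
  | dummy : P → Vert P

variable {C D} {P : Type}

namespace Vert

def equivSum : Vert C D P ≃
    (Fin (2 ^ D) ⊕ Σ ℓ : Fin D, Fin (2 ^ (D - 1 - ℓ)) × Outcome C ℓ × Outcome C ℓ) ⊕ P where
  toFun
    | root β => .inl (.inl β)
    | merge ℓ b ωA ωB => .inl (.inr ⟨ℓ, b, ωA, ωB⟩)
    | dummy p => .inr p
  invFun
    | .inl (.inl β) => root β
    | .inl (.inr ⟨ℓ, b, ωA, ωB⟩) => merge ℓ b ωA ωB
    | .inr p => dummy p
  left_inv v := by cases v <;> rfl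
  right_inv x := by rcases x with (β | ⟨ℓ, b, ωA, ωB⟩) | p <;> rfl

noncomputable instance [Fintype P] : Fintype (Vert C D P) := .ofEquiv _ equivSum.symm

end Vert

open Vert

/-- The vertex where the packets of bundle `b` of level `ℓ` wait after outcome `ω` (the last
branch only serves out-of-range indices). -/
def port : (ℓ : ℕ) → ℕ → Outcome C ℓ → Vert C D P
  | 0, b, _ => root (Fin.ofNat _ b)
  | ℓ + 1, b, (ωA, ωB, _) =>
    if h : ℓ < D then merge ⟨ℓ, h⟩ (Fin.ofNat _ b) ωA ωB else root (Fin.ofNat _ 0)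

def inTree (χ : Packet C D) : Vert C D P → Prop
  | root β => β = χ.1
  | merge ℓ b ωA ωB => χ ∈ packets C D ℓ (2 * b) ωA ∪ packets C D ℓ (2 * b + 1) ωB
  | dummy _ => False

noncomputable def parent (χ : Packet C D) : Vert C D P → Vert C D P
  | merge ℓ b ωA ωB =>
    if χ ∈ packets C D ℓ (2 * b) ωA then port ℓ (2 * b) ωA else port ℓ (2 * b + 1) ωB
  | v => v

def depth : Vert C D P → ℕ
  | merge ℓ _ _ _ => ℓ + 1
  | _ => 0

variable {ℓ b : ℕ}

theorem div_eq_of_mem_packets :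
    ∀ {ℓ b : ℕ} {ω : Outcome C ℓ} {χ : Packet C D}, χ ∈ packets C D ℓ b ω → (χ.1 : ℕ) / 2 ^ ℓ = b
  | 0, b, _, χ, h => by simpa [packets] using h
  | ℓ + 1, b, (ωA, ωB, M), χ, h => by
    rw [pow_succ, ← Nat.div_div_eq_div_mul]
    rcases mem_union.mp (selectByIndex_subset _ _ h) with h | h <;>
      rw [div_eq_of_mem_packets h] <;> omega

theorem disjoint_packets (ωA ωB : Outcome C ℓ) :
    Disjoint (packets C D ℓ (2 * b) ωA) (packets C D ℓ (2 * b + 1) ωB) :=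
  disjoint_left.mpr fun _ hA hB => by
    have := div_eq_of_mem_packets hA; have := div_eq_of_mem_packets hB; omega

theorem card_packets_le : ∀ {ℓ b : ℕ} (ω : Outcome C ℓ), #(packets C D ℓ b ω) ≤ C
  | 0, b, _ => by
    refine (card_le_card_of_injOn Prod.snd (fun _ _ => mem_univ _) ?_).trans_eq (card_fin C)
    intro χ hχ χ' hχ' h
    simp only [packets, coe_filter, mem_univ, true_and, Set.mem_ofPred_eq] at hχ hχ'
    exact Prod.ext (Fin.ext (hχ.trans hχ'.symm)) h
  | ℓ + 1, b, (ωA, ωB, M) => (card_selectByIndex_le _ _).trans (mem_filter.mp M.2).2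

theorem card_packets_zero (hb : b < 2 ^ D) (ω : Outcome C 0) : #(packets C D 0 b ω) = C := by
  refine le_antisymm (card_packets_le ω) ?_
  calc C = #(univ : Finset (Fin C)) := by simp
    _ ≤ _ := card_le_card_of_injOn (fun i => (⟨b, hb⟩, i)) (fun i _ => by simp [packets])
      fun _ _ _ _ h => (Prod.ext_iff.mp h).2

theorem exists_mask {ωA ωB : Outcome C ℓ} {σ : Finset (Packet C D)}
    (hσ : σ ⊆ packets C D ℓ (2 * b) ωA ∪ packets C D ℓ (2 * b + 1) ωB) (hσC : #σ ≤ C) :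
    ∃ M : masks C, packets C D (ℓ + 1) b (ωA, ωB, M) = σ := by
  set U := packets C D ℓ (2 * b) ωA ∪ packets C D ℓ (2 * b + 1) ωB
  have hU : #U ≤ 2 * C := (card_union_le _ _).trans
    (by have := card_packets_le (D := D) (b := 2 * b) ωA
        have := card_packets_le (D := D) (b := 2 * b + 1) ωB
        omega)
  have hM : σ.image U.toList.idxOf ∈ masks C := by
    refine mem_filter.mpr ⟨mem_powerset.mpr fun i hi => ?_, card_image_le.trans hσC⟩
    obtain ⟨x, hx, rfl⟩ := mem_image.mp hi
    exact mem_range.mpr ((idxOf_toList_lt_card (hσ hx)).trans_le hU)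
  refine ⟨⟨_, hM⟩, ?_⟩
  rw [packets]
  exact selectByIndex_image_idxOf hσ

theorem port_zero (hb : b < 2 ^ D) (ω : Outcome C 0) :
    (port 0 b ω : Vert C D P) = root ⟨b, hb⟩ := by
  simp [port, Fin.ofNat, Nat.mod_eq_of_lt hb]

theorem port_succ (hℓ : ℓ < D) (hb : b < 2 ^ (D - (ℓ + 1))) (ωA ωB : Outcome C ℓ) (M : masks C) :
    (port (ℓ + 1) b (ωA, ωB, M) : Vert C D P) =
      merge ⟨ℓ, hℓ⟩ ⟨b, by rwa [Nat.sub_sub, Nat.add_comm 1]⟩ ωA ωB := by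
  have : b < 2 ^ (D - 1 - ℓ) := by rwa [Nat.sub_sub, Nat.add_comm 1]
  simp [port, hℓ, Fin.ofNat, Nat.mod_eq_of_lt this]

theorem two_mul_add_one_lt (hℓ : ℓ < D) (hb : b < 2 ^ (D - 1 - ℓ)) : 2 * b + 1 < 2 ^ (D - ℓ) := by
  rw [show D - ℓ = D - 1 - ℓ + 1 by omega, pow_succ]
  omega

theorem depth_port (hℓ : ℓ ≤ D) (hb : b < 2 ^ (D - ℓ)) (ω : Outcome C ℓ) :
    depth (port ℓ b ω : Vert C D P) = ℓ := by
  cases ℓ with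
  | zero => rw [port_zero (by simpa using hb)]; rfl
  | succ ℓ => obtain ⟨ωA, ωB, M⟩ := ω; rw [port_succ (by omega) hb]; rfl

theorem inTree_port (hℓ : ℓ ≤ D) (hb : b < 2 ^ (D - ℓ)) {ω : Outcome C ℓ} {χ : Packet C D}
    (hχ : χ ∈ packets C D ℓ b ω) : inTree χ (port ℓ b ω : Vert C D P) := by
  cases ℓ with
  | zero =>
    rw [port_zero (by simpa using hb)]
    simp only [packets, mem_filter, mem_univ, true_and] at hχ
    exact Fin.ext hχ.symm
  | succ ℓ =>
    obtain ⟨ωA, ωB, M⟩ := ω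
    rw [port_succ (by omega) hb]
    rw [packets] at hχ
    exact selectByIndex_subset _ _ hχ

theorem port_ne (hℓ : ℓ ≤ D) {b' : ℕ} (hb : b < 2 ^ (D - ℓ)) (hb' : b' < 2 ^ (D - ℓ))
    (hbb' : b ≠ b') (ω ω' : Outcome C ℓ) : (port ℓ b ω : Vert C D P) ≠ port ℓ b' ω' := by
  cases ℓ with
  | zero =>
    rw [port_zero (by simpa using hb), port_zero (by simpa using hb')]
    simpa using hbb'
  | succ ℓ =>
    obtain ⟨ωA, ωB, M⟩ := ω
    obtain ⟨ωA', ωB', M'⟩ := ω'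
    rw [port_succ (by omega) hb, port_succ (by omega) hb']
    simp [hbb']

theorem depth_le (v : Vert C D P) : depth v ≤ D := by
  cases v with
  | merge ℓ => exact ℓ.isLt
  | _ => exact Nat.zero_le _

theorem inTree_parent {χ : Packet C D} {v : Vert C D P} (hv : inTree χ v) (hvr : v ≠ root χ.1) :
    inTree χ (parent χ v) ∧ depth v = depth (parent χ v) + 1 := by
  cases v with
  | root β => exact absurd (congrArg root hv) hvr
  | dummy => exact hv.elim
  | merge ℓ b ωA ωB =>
    have hB := two_mul_add_one_lt ℓ.isLt b.isLt
    by_cases hA : χ ∈ packets C D ℓ (2 * b) ωA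
    · simp only [parent, if_pos hA]
      exact ⟨inTree_port ℓ.isLt.le (by omega) hA, by rw [depth_port ℓ.isLt.le (by omega)]; rfl⟩
    · have hχB := (mem_union.mp hv).resolve_left hA
      simp only [parent, if_neg hA]
      exact ⟨inTree_port ℓ.isLt.le hB hχB, by rw [depth_port ℓ.isLt.le hB]; rfl⟩

variable (C D P) in
noncomputable def family : TreeFamily (Vert C D P) (Packet C D) where
  root χ := root χ.1
  mem χ := {v | inTree χ v}
  parent := parent
  depth := depth
  root_mem _ := rfl
  depth_root _ := rfl
  parent_mem hv hvr := (inTree_parent hv hvr).1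
  depth_parent hv hvr := (inTree_parent hv hvr).2

theorem isParent_port_left {ℓ : Fin D} {b : Fin (2 ^ (D - 1 - ℓ))} {ωA ωB : Outcome C ℓ}
    {χ : Packet C D} (hχ : χ ∈ packets C D ℓ (2 * b) ωA) :
    (family C D P).IsParent χ (port ℓ (2 * b) ωA) (merge ℓ b ωA ωB) :=
  ⟨mem_union_left _ hχ, by simp [family], if_pos hχ⟩

theorem isParent_port_right {ℓ : Fin D} {b : Fin (2 ^ (D - 1 - ℓ))} {ωA ωB : Outcome C ℓ}
    {χ : Packet C D} (hχ : χ ∈ packets C D ℓ (2 * b + 1) ωB) :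
    (family C D P).IsParent χ (port ℓ (2 * b + 1) ωB) (merge ℓ b ωA ωB) :=
  ⟨mem_union_right _ hχ, by simp [family],
    if_neg fun hA => disjoint_left.mp (disjoint_packets ωA ωB) hA hχ⟩

open Classical in
/-- The two sub-bundles of a merge vertex have distinct ports, so the labels of an edge from a
port down to a merge vertex all come from one sub-bundle. -/
theorem card_filter_isParent_le (u v : Vert C D P) :
    #(univ.filter ((family C D P).IsParent · u v)) ≤ C := by
  cases v with
  | merge ℓ b ωA ωB =>
    have hB := two_mul_add_one_lt ℓ.isLt b.isLt
    have hne := port_ne (P := P) (b := 2 * b) ℓ.isLt.le (by omega) hB (by omega) ωA ωB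
    by_cases hu : u = port ℓ (2 * b) ωA
    · refine (card_le_card fun χ hχ => ?_).trans (card_packets_le (b := 2 * b) ωA)
      obtain ⟨hχv, -, hpar⟩ := (mem_filter.mp hχ).2
      by_contra hA
      have hχB := (mem_union.mp hχv).resolve_left hA
      exact hne (hu ▸ hpar ▸ (isParent_port_right (ωA := ωA) hχB).2.2)
    · refine (card_le_card fun χ hχ => ?_).trans (card_packets_le (b := 2 * b + 1) ωB)
      obtain ⟨hχv, -, hpar⟩ := (mem_filter.mp hχ).2
      have hA : χ ∉ packets C D ℓ (2 * b) ωA := fun hA =>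
        hu (hpar ▸ (isParent_port_left (ωB := ωB) hA).2.2)
      exact (mem_union.mp hχv).resolve_left hA
  | root β =>
    rw [filter_false_of_mem fun χ _ ⟨hχv, hvr, _⟩ => hvr (congrArg root hχv), card_empty]
    exact Nat.zero_le C
  | dummy =>
    rw [filter_false_of_mem fun χ _ h => (h.1 : False), card_empty]
    exact Nat.zero_le C

theorem exists_card_packets_eq :
    ∀ {ℓ b : ℕ}, ℓ ≤ D → b < 2 ^ (D - ℓ) → ∃ ω : Outcome C ℓ, #(packets C D ℓ b ω) = C
  | 0, b, _, hb => ⟨(), card_packets_zero (by simpa using hb) ()⟩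
  | ℓ + 1, b, hℓ, hb => by
    have hB := two_mul_add_one_lt (D := D) (ℓ := ℓ) (b := b) (by omega)
      (by rwa [Nat.sub_sub, Nat.add_comm 1])
    obtain ⟨ωA, hA⟩ := exists_card_packets_eq (ℓ := ℓ) (b := 2 * b) (by omega) (by omega)
    obtain ⟨ωB, hB⟩ := exists_card_packets_eq (ℓ := ℓ) (b := 2 * b + 1) (by omega) hB
    obtain ⟨σ, hσ, hσC⟩ := exists_subset_card_eq (n := C)
      (s := packets C D ℓ (2 * b) ωA ∪ packets C D ℓ (2 * b + 1) ωB)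
      (by rw [card_union_of_disjoint (disjoint_packets ωA ωB)]; omega)
    obtain ⟨M, hM⟩ := exists_mask hσ hσC.le
    exact ⟨(ωA, ωB, M), hM ▸ hσC⟩

variable (S : Schedule (Vert C D P) (Packet C D) (family C D P).lab (family C D P).root)

/-- The adversary's step: each of the two edges into a merge vertex delivers at most `C / 2`
packets during the `C / 2` rounds after its sub-bundle's packets reach its port, so at least
`C` of the `2 C` packets are still missing at the merge vertex after those rounds. -/
theorem exists_late_subset {ℓ : Fin D} {b : Fin (2 ^ (D - 1 - ℓ))} {ωA ωB : Outcome C ℓ} {τ : ℕ}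
    (hcA : #(packets C D ℓ (2 * b) ωA) = C) (hcB : #(packets C D ℓ (2 * b + 1) ωB) = C)
    (hlA : ∀ χ ∈ packets C D ℓ (2 * b) ωA, ∀ t, port ℓ (2 * b) ωA ∈ S.knows t χ → τ ≤ t)
    (hlB : ∀ χ ∈ packets C D ℓ (2 * b + 1) ωB, ∀ t, port ℓ (2 * b + 1) ωB ∈ S.knows t χ → τ ≤ t) :
    ∃ σ ⊆ packets C D ℓ (2 * b) ωA ∪ packets C D ℓ (2 * b + 1) ωB, #σ = C ∧
      ∀ χ ∈ σ, ∀ t, merge ℓ b ωA ωB ∈ S.knows t χ → τ + C / 2 < t := by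
  classical
  set early := fun χ => merge ℓ b ωA ωB ∈ S.knows (τ + C / 2) χ
  have hA : #((packets C D ℓ (2 * b) ωA).filter early) ≤ C / 2 :=
    (family C D P).card_filter_mem_knows_le S _ (fun _ hχ => isParent_port_left hχ) hlA
  have hB : #((packets C D ℓ (2 * b + 1) ωB).filter early) ≤ C / 2 :=
    (family C D P).card_filter_mem_knows_le S _ (fun _ hχ => isParent_port_right hχ) hlB
  have hlate :
      C ≤ #((packets C D ℓ (2 * b) ωA ∪ packets C D ℓ (2 * b + 1) ωB).filter (¬ early ·)) := by
    have hAB := card_filter_add_card_filter_not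
      (s := packets C D ℓ (2 * b) ωA ∪ packets C D ℓ (2 * b + 1) ωB) early
    rw [filter_union, card_union_of_disjoint (disjoint_packets ωA ωB)] at hAB
    have := card_union_le ((packets C D ℓ (2 * b) ωA).filter early)
      ((packets C D ℓ (2 * b + 1) ωB).filter early)
    omega
  obtain ⟨σ, hσ, hσC⟩ := exists_subset_card_eq hlate
  refine ⟨σ, hσ.trans (filter_subset _ _), hσC, fun χ hχ t ht => ?_⟩
  by_contra! hle
  exact (mem_filter.mp (hσ hχ)).2 (S.knows_mono χ hle ht)

theorem exists_late_outcome :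
    ∀ {ℓ b : ℕ}, ℓ ≤ D → b < 2 ^ (D - ℓ) → ∃ ω : Outcome C ℓ, #(packets C D ℓ b ω) = C ∧
      ∀ χ ∈ packets C D ℓ b ω, ∀ t, (port ℓ b ω : Vert C D P) ∈ S.knows t χ → ℓ * (C / 2 + 1) ≤ t
  | 0, b, _, hb => ⟨(), card_packets_zero (by simpa using hb) (), fun _ _ _ _ => by simp⟩
  | ℓ + 1, b, hℓ, hb => by
    have hb' : b < 2 ^ (D - 1 - ℓ) := by rwa [Nat.sub_sub, Nat.add_comm 1]
    have hB := two_mul_add_one_lt (D := D) (ℓ := ℓ) (by omega) hb'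
    obtain ⟨ωA, hcA, hlA⟩ := exists_late_outcome (ℓ := ℓ) (b := 2 * b) (by omega) (by omega)
    obtain ⟨ωB, hcB, hlB⟩ := exists_late_outcome (ℓ := ℓ) (b := 2 * b + 1) (by omega) hB
    obtain ⟨σ, hσ, hσC, hσlate⟩ :=
      exists_late_subset (ℓ := ⟨ℓ, by omega⟩) (b := ⟨b, hb'⟩) S hcA hcB hlA hlB
    obtain ⟨M, hM⟩ := exists_mask hσ hσC.le
    refine ⟨(ωA, ωB, M), hM ▸ hσC, fun χ hχ t ht => ?_⟩
    rw [port_succ (by omega) hb] at ht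
    have := hσlate χ (hM ▸ hχ) t ht
    rw [Nat.succ_mul]
    omega

theorem card_lab_le (u v : Vert C D P) : #((family C D P).lab u v) ≤ C :=
  (family C D P).card_lab_le card_filter_isParent_le u v

theorem exists_card_lab_eq (hD : 0 < D) : ∃ u v : Vert C D P, #((family C D P).lab u v) = C := by
  let v : Vert C D P := merge ⟨0, hD⟩ ⟨0, Nat.two_pow_pos _⟩ () ()
  refine ⟨port 0 0 (), v, le_antisymm (card_lab_le _ _) ?_⟩
  calc C = #(packets C D 0 0 ()) := (card_packets_zero (Nat.two_pow_pos _) ()).symm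
    _ ≤ _ := card_le_card fun χ hχ =>
      (family C D P).mem_lab.mpr (Or.inl (isParent_port_left (b := ⟨0, _⟩) hχ))

theorem length_le {χ : Packet C D} {v : Vert C D P}
    {p : (labelGraph (family C D P).lab χ).Walk ((family C D P).root χ) v} (hp : p.IsPath) :
    p.length ≤ D := by
  rw [← Walk.length_reverse, (family C D P).length_eq_depth hp.reverse]
  exact depth_le v

theorem exists_isPath_length_eq (hC : 0 < C) :
    ∃ (χ : Packet C D) (v : Vert C D P)
      (p : (labelGraph (family C D P).lab χ).Walk ((family C D P).root χ) v),
      p.IsPath ∧ p.length = D := by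
  obtain ⟨ω, hω⟩ := exists_card_packets_eq (C := C) (ℓ := D) (b := 0) le_rfl (Nat.two_pow_pos _)
  obtain ⟨χ, hχ⟩ := card_pos.mp (by rwa [hω])
  obtain ⟨p, hp, hlen⟩ := (family C D P).exists_isPath_to_root
    (inTree_port (P := P) le_rfl (Nat.two_pow_pos _) hχ)
  refine ⟨χ, _, p.reverse, hp.reverse, ?_⟩
  rw [Walk.length_reverse, hlen]
  exact depth_port le_rfl (Nat.two_pow_pos _) ω

theorem mul_le_two_mul_of_solves {T : ℕ} (hS : S.Solves T) : C * D ≤ 2 * T := by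
  obtain ⟨ω, hω, hlate⟩ := exists_late_outcome S (ℓ := D) (b := 0) le_rfl (Nat.two_pow_pos _)
  rcases (packets C D D 0 ω).eq_empty_or_nonempty with hempty | ⟨χ, hχ⟩
  · simp [← hω, hempty]
  have hport := inTree_port (P := P) le_rfl (Nat.two_pow_pos _) hχ
  have := hlate χ hχ T (hS χ _ ((family C D P).labelSupp_lab ▸ hport))
  have : C ≤ 2 * (C / 2 + 1) := by omega
  nlinarith

theorem card_masks_le : #(masks C) ≤ 4 ^ C := by
  refine (card_filter_le _ _).trans ?_
  rw [card_powerset, card_range, pow_mul]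
  norm_num

theorem card_outcome_mul_le : ∀ ℓ, Fintype.card (Outcome C ℓ) * 4 ^ C ≤ (4 ^ C) ^ 2 ^ ℓ
  | 0 => by rw [show Fintype.card (Outcome C 0) = 1 from rfl, one_mul, pow_zero, pow_one]
  | ℓ + 1 => by
    have hcard : Fintype.card (Outcome C (ℓ + 1)) =
        Fintype.card (Outcome C ℓ) * (Fintype.card (Outcome C ℓ) * #(masks C)) := by
      rw [show Fintype.card (Outcome C (ℓ + 1)) =
        Fintype.card (Outcome C ℓ × Outcome C ℓ × masks C) from rfl]
      simp [Fintype.card_prod]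
    have ih := card_outcome_mul_le ℓ
    calc Fintype.card (Outcome C (ℓ + 1)) * 4 ^ C
        = Fintype.card (Outcome C ℓ) * Fintype.card (Outcome C ℓ) * (#(masks C) * 4 ^ C) := by
          rw [hcard]; ring
      _ ≤ Fintype.card (Outcome C ℓ) * Fintype.card (Outcome C ℓ) * (4 ^ C * 4 ^ C) :=
          Nat.mul_le_mul_left _ (Nat.mul_le_mul_right _ card_masks_le)
      _ = (Fintype.card (Outcome C ℓ) * 4 ^ C) * (Fintype.card (Outcome C ℓ) * 4 ^ C) := by ring
      _ ≤ (4 ^ C) ^ 2 ^ ℓ * (4 ^ C) ^ 2 ^ ℓ := Nat.mul_le_mul ih ih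
      _ = (4 ^ C) ^ 2 ^ (ℓ + 1) := by rw [← pow_add, pow_succ, mul_two]

/-- Level `ℓ < D` has `2 ^ (D - 1 - ℓ)` bundles, each with at most `c ℓ ^ 2` merge vertices; the
bound at `m` says the first `m` levels fit, with room to spare, into the `2 ^ (D - m)` bundles of
level `m` with `K ^ 2 ^ m` vertices each. -/
theorem two_mul_sum_le {K D : ℕ} (hK : 4 ≤ K) (c : ℕ → ℕ) (hc : ∀ ℓ, c ℓ * K ≤ K ^ 2 ^ ℓ) :
    ∀ m ≤ D, 2 * (2 ^ D + ∑ ℓ ∈ range m, 2 ^ (D - 1 - ℓ) * c ℓ ^ 2) ≤ 2 ^ (D - m) * K ^ 2 ^ m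
  | 0, _ => by
    simp only [range_zero, sum_empty, add_zero, Nat.sub_zero, pow_zero, pow_one]
    rw [mul_comm]
    exact Nat.mul_le_mul_left _ (by omega)
  | m + 1, hm => by
    have ih := two_mul_sum_le (D := D) hK c hc m (by omega)
    set e := 2 ^ (D - (m + 1))
    have he : 2 ^ (D - m) = 2 * e := by
      rw [show D - m = D - (m + 1) + 1 by omega, pow_succ, mul_comm]
    have hX : K ^ 2 ^ (m + 1) = K ^ 2 ^ m * K ^ 2 ^ m := by rw [pow_succ, pow_mul, sq]
    rw [he] at ih
    rw [sum_range_succ, show 2 ^ (D - 1 - m) = e by rw [show D - 1 - m = D - (m + 1) by omega], hX]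
    have hcX : c m * 4 ≤ K ^ 2 ^ m := (Nat.mul_le_mul_left _ hK).trans (hc m)
    have hKX : K ≤ K ^ 2 ^ m := Nat.le_self_pow (Nat.two_pow_pos m).ne' K
    have key : 2 * K ^ 2 ^ m + 2 * c m ^ 2 ≤ K ^ 2 ^ m * K ^ 2 ^ m := by nlinarith
    have := Nat.mul_le_mul_left e key
    nlinarith

theorem card_vert (P : Type) [Fintype P] :
    Fintype.card (Vert C D P) = Fintype.card (Vert C D Empty) + Fintype.card P := by
  simp only [Fintype.card_congr Vert.equivSum, Fintype.card_sum, Fintype.card_empty, add_zero]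

theorem card_vert_empty_le (hC : 0 < C) :
    Fintype.card (Vert C D Empty) ≤ 2 ^ (C * 2 ^ (D + 1)) := by
  have h := two_mul_sum_le (D := D) (Nat.le_self_pow hC.ne' 4)
    (fun ℓ => Fintype.card (Outcome C ℓ)) card_outcome_mul_le D le_rfl
  rw [Nat.sub_self, pow_zero, one_mul] at h
  rw [Fintype.card_congr Vert.equivSum]
  simp only [Fintype.card_sum, Fintype.card_sigma, Fintype.card_prod, Fintype.card_fin,
    Fintype.card_empty, add_zero]
  rw [Fin.sum_univ_eq_sum_range (fun ℓ => 2 ^ (D - 1 - ℓ) *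
    (Fintype.card (Outcome C ℓ) * Fintype.card (Outcome C ℓ)))]
  calc _ ≤ (4 ^ C) ^ 2 ^ D := by simpa [sq] using (Nat.le_mul_of_pos_left _ two_pos).trans h
    _ = 2 ^ (C * 2 ^ (D + 1)) := by
      rw [← pow_mul, pow_succ, show (4 : ℕ) = 2 ^ 2 by rfl, ← pow_mul]
      ring_nf

end MergeInstance

/-- For any positive integers `C`, `D`, `n` with
`C·2^(D+1) ≤ log₂ n`, there exists a simultaneous multicast instance on an `n`-node
graph — finitely many rooted trees given by edge label sets `lab`, each label
inducing a tree containing its root, with congestion exactly `C` and dilation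
exactly `D` — such that every store-and-forward schedule delivering all packets
within `T` rounds satisfies `C·D ≤ 2·T`, i.e. has length at least `C·D/2`. -/
theorem multicast_lower_bound_exists (C D n : ℕ) (hC : 0 < C) (hD : 0 < D)
    (hn : 0 < n) (hlog : C * 2 ^ (D + 1) ≤ Nat.log 2 n) :
    ∃ (V : Type) (inst : Fintype V) (L : Type) (lab : V → V → Finset L)
      (root : L → V),
      @Fintype.card V inst = n ∧
      (∀ u v, lab u v = lab v u) ∧
      (∀ u v, (lab u v).card ≤ C) ∧ (∃ u v, (lab u v).card = C) ∧
      (∀ χ, root χ ∈ labelSupp lab root χ ∧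
        ((labelGraph lab χ).induce (labelSupp lab root χ)).IsTree) ∧
      (∀ (χ : L) (v : V) (p : (labelGraph lab χ).Walk (root χ) v),
          p.IsPath → p.length ≤ D) ∧
      (∃ (χ : L) (v : V) (p : (labelGraph lab χ).Walk (root χ) v),
          p.IsPath ∧ p.length = D) ∧
      ∀ (Sc : Schedule V L lab root) (T : ℕ), Sc.Solves T → C * D ≤ 2 * T := by
  open MergeInstance in
  have hcore : Fintype.card (Vert C D Empty) ≤ n :=
    (card_vert_empty_le hC).trans <| (Nat.pow_le_pow_right two_pos hlog).trans
      (Nat.pow_log_le_self 2 hn.ne')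
  let P := Fin (n - Fintype.card (Vert C D Empty))
  let F := family C D P
  refine ⟨Vert C D P, inferInstance, Packet C D, F.lab, F.root, ?_, F.lab_comm, card_lab_le,
    exists_card_lab_eq hD, fun χ => ⟨Or.inl rfl, F.labelSupp_lab ▸ F.isTree_induce⟩,
    fun _ _ _ => length_le, exists_isPath_length_eq hC, fun S _ => mul_le_two_mul_of_solves S⟩
  rw [card_vert, Fintype.card_fin]
  omega
end
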